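/- With notation as before (b ≥ 3, digits d_1 < d_2, u = d_2 − d_1 = u_1 u_2 with u_1 b-smooth and gcd(u_2, b) = 1), let N = φ(u_2^2(b−1)^2), m_1 = N − 1, v = d_1^{m_1}, w_1 = d_2 d_1^{m_1}, and let p_1/q_1 be the reduced form of (0.v \overline{w_1})_b. Then u_2 q_1 = b^N − 1. -/

import Mathlib

/-!
Since `m₁ + 1 = N`, the preperiodic expansion equals the purely periodic one
`(0.\overline{d₁^{m₁} d₂})_b`, that is `(d₁ S + u) / (b ^ N - 1)` with `S = 1 + b + ⋯ + b ^ (N - 1)`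
and `b ^ N - 1 = (b - 1) S`. Euler's theorem gives `u₂² (b - 1)² ∣ b ^ N - 1`, hence
`u₂ (b - 1) ∣ S`; write `S = u₂ T` with `(b - 1) ∣ T`. After cancelling `u₂` the fraction is
`(d₁ T + u₁) / ((b - 1) T)`, whose numerator is `≡ u₁` modulo both `T` and `b - 1`; and `u₁` is
coprime to both, because its prime factors divide `b`.
-/

open Finset Nat

theorem ofDigits_replicate (b d n : ℕ) :
    ofDigits b (List.replicate n d) = d * ∑ i ∈ range n, b ^ i := by
  induction n with
  | zero => simp
  | succ n ih => rw [List.replicate_succ, ofDigits_cons, ih, geom_sum_succ]; ring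

theorem ofDigits_cons_replicate {b d₁ d₂ : ℕ} (m : ℕ) (hd : d₁ ≤ d₂) :
    ofDigits b (d₂ :: List.replicate m d₁) =
      d₁ * ∑ i ∈ range (m + 1), b ^ i + (d₂ - d₁) := by
  rw [ofDigits_cons, ofDigits_replicate, geom_sum_succ]; grind

theorem cast_pow_sub_one_eq_mul_geom_sum {b : ℕ} (hb : 1 ≤ b) (n : ℕ) :
    (b : ℚ) ^ n - 1 = ((b - 1) * ∑ i ∈ range n, b ^ i : ℕ) := by
  rw [mul_comm, geom_sum_mul_of_one_le hb, Nat.cast_sub (Nat.one_le_pow _ _ hb)]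
  push_cast; ring

theorem ofDigits_reverse_replicate_append_sub_div {b : ℕ} (hb : b ≠ 0) (d₁ d₂ m : ℕ) :
    ((ofDigits b (List.replicate m d₁ ++ d₂ :: List.replicate m d₁).reverse : ℚ) -
        (ofDigits b (List.replicate m d₁).reverse : ℚ)) /
        ((b : ℚ) ^ m * ((b : ℚ) ^ (m + 1) - 1)) =
      ((ofDigits b (d₂ :: List.replicate m d₁) : ℕ) : ℚ) / ((b : ℚ) ^ (m + 1) - 1) := by
  simp only [← Nat.coe_ofDigits ℚ, List.reverse_append, List.reverse_cons,
    List.reverse_replicate, List.append_assoc, List.singleton_append, ofDigits_append,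
    List.length_replicate]
  push_cast
  rw [add_sub_cancel_left, mul_div_mul_left _ _ (by positivity)]

theorem coprime_mul_add_of_dvd {k T u : ℕ} (d : ℕ) (hk : k ∣ T) (hu : Coprime u k) :
    Coprime (d * T + u) k := by
  obtain ⟨t, rfl⟩ := hk
  rwa [show d * (k * t) + u = u + d * t * k by ring, coprime_add_mul_right_left]

theorem den_natCast_div_natCast_of_coprime {a c : ℕ} (hc : c ≠ 0) (h : Coprime a c) :
    ((a : ℚ) / c).den = c := by
  have := Rat.den_div_eq_of_coprime (a := a) (b := c) (by omega) (by simpa using h)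
  rw [Int.cast_natCast, Int.cast_natCast] at this
  exact Int.ofNat_inj.mp this

theorem coprime_of_forall_prime_dvd_imp_dvd {m b k : ℕ}
    (hm : ∀ p : ℕ, p.Prime → p ∣ m → p ∣ b) (hb : Coprime b k) : Coprime m k :=
  Nat.coprime_of_dvd fun p hp hpm hpk => hp.not_dvd_one (hb ▸ Nat.dvd_gcd (hm p hp hpm) hpk)

theorem dvd_pow_totient_sub_one {b k : ℕ} (hb : 0 < b) (h : Coprime b k) : k ∣ b ^ φ k - 1 :=
  (modEq_iff_dvd' (Nat.one_le_pow _ _ hb)).mp (ModEq.pow_totient h).symm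

theorem coprime_pow_sub_one {b n : ℕ} (hb : 0 < b) (hn : n ≠ 0) : Coprime b (b ^ n - 1) :=
  ((coprime_self_sub_right (Nat.one_le_pow _ _ hb)).mpr (coprime_one_right _)).coprime_dvd_left
    (dvd_pow_self b hn)

theorem mul_den_add_mul_div_mul_eq {d u₁ u₂ k S : ℕ} (hu₂ : u₂ ≠ 0) (hkS : u₂ * k ∣ S)
    (hcop : Coprime u₁ (k * S)) (hS : k * S ≠ 0) :
    u₂ * (((d * S + u₁ * u₂ : ℕ) : ℚ) / (k * S : ℕ)).den = k * S := by
  obtain ⟨T, rfl⟩ := dvd_trans (dvd_mul_right u₂ k) hkS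
  have hkT : k ∣ T := Nat.dvd_of_mul_dvd_mul_left (Nat.pos_of_ne_zero hu₂) hkS
  have hcopT : Coprime u₁ (k * T) :=
    hcop.coprime_dvd_right (mul_dvd_mul_left k (dvd_mul_left T u₂))
  have hfrac : ((d * (u₂ * T) + u₁ * u₂ : ℕ) : ℚ) / (k * (u₂ * T) : ℕ) =
      ((d * T + u₁ : ℕ) : ℚ) / (k * T : ℕ) := by
    rw [show d * (u₂ * T) + u₁ * u₂ = u₂ * (d * T + u₁) by ring,
      show k * (u₂ * T) = u₂ * (k * T) by ring, Nat.cast_mul, Nat.cast_mul u₂,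
      mul_div_mul_left _ _ (Nat.cast_ne_zero.mpr hu₂)]
  rw [hfrac, den_natCast_div_natCast_of_coprime (by grind)
    ((coprime_mul_add_of_dvd d hkT (hcopT.coprime_dvd_right (dvd_mul_right k T))).mul_right
      (coprime_mul_add_of_dvd d dvd_rfl (hcopT.coprime_dvd_right (dvd_mul_left T k))))]
  ring

theorem stmt7_general (b d₁ d₂ u₁ u₂ : ℕ) (hb : 3 ≤ b) (hd : d₁ < d₂)
    (hfac : d₂ - d₁ = u₁ * u₂)
    (h₁ : ∀ p : ℕ, p.Prime → p ∣ u₁ → p ∣ b)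
    (h₂ : ∀ p : ℕ, p.Prime → p ∣ u₂ → ¬ p ∣ b)
    (N m₁ : ℕ) (hN : N = Nat.totient (u₂ ^ 2 * (b - 1) ^ 2)) (hm₁ : m₁ = N - 1)
    (x : ℚ)
    (hx : x = ((Nat.ofDigits b
          (List.replicate m₁ d₁ ++ (d₂ :: List.replicate m₁ d₁)).reverse : ℚ) -
        (Nat.ofDigits b (List.replicate m₁ d₁).reverse : ℚ)) /
      ((b : ℚ) ^ m₁ * ((b : ℚ) ^ (m₁ + 1) - 1))) :
    u₂ * x.den = b ^ N - 1 := by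
  set S := ∑ i ∈ range N, b ^ i
  have hu₂b : Coprime u₂ b := Nat.coprime_of_dvd h₂
  have hu₂ : u₂ ≠ 0 := by rintro rfl; simp at hu₂b; omega
  have hN0 : N ≠ 0 := by simp [hN, hu₂]; omega
  have hSeq : (b - 1) * S = b ^ N - 1 := by rw [mul_comm, geom_sum_mul_of_one_le (by omega)]
  have hEuler : u₂ ^ 2 * (b - 1) ^ 2 ∣ b ^ N - 1 := by
    have hb₁ : Coprime b (b - 1) := (coprime_self_sub_right (by omega)).mpr (coprime_one_right b)
    exact hN ▸ dvd_pow_totient_sub_one (by omega)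
      ((hu₂b.symm.pow_right 2).mul_right (hb₁.pow_right 2))
  have hdvdS : u₂ * (b - 1) ∣ S := by
    refine Nat.dvd_of_mul_dvd_mul_left (show 0 < b - 1 by omega) ?_
    rw [hSeq]
    exact dvd_trans ⟨u₂, by ring⟩ hEuler
  have hxS : x = ((d₁ * S + u₁ * u₂ : ℕ) : ℚ) / ((b - 1) * S : ℕ) := by
    rw [hx, ofDigits_reverse_replicate_append_sub_div (by omega), ofDigits_cons_replicate _ hd.le,
      hfac, cast_pow_sub_one_eq_mul_geom_sum (by omega), hm₁, Nat.sub_add_cancel (by omega)]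
  have hu₁ : Coprime u₁ ((b - 1) * S) :=
    coprime_of_forall_prime_dvd_imp_dvd h₁ (hSeq ▸ coprime_pow_sub_one (by omega) hN0)
  have hS0 : (b - 1) * S ≠ 0 := by
    rw [hSeq]; have := Nat.one_lt_pow hN0 (by omega : 1 < b); omega
  rw [hxS, mul_den_add_mul_div_mul_eq hu₂ hdvdS hu₁ hS0, hSeq]

/-- with `b ≥ 3`, digits `d₁ < d₂ ≤ b−1`, `u = d₂ − d₁ = u₁ u₂`
(`u₁` `b`-smooth, `u₂` coprime to `b`), `N = φ(u₂²(b−1)²)`, `m₁ = N − 1`,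
`v = d₁^{m₁}`, `w₁ = d₂ d₁^{m₁}`, and `p₁/q₁` the reduced form of
`(0.v ⟨w₁⟩)_b = ((v w₁)_b − (v)_b)/(b^{m₁}(b^{N} − 1))`, one has
`u₂ q₁ = b^N − 1`. -/
theorem stmt7 (b d₁ d₂ u₁ u₂ : ℕ) (hb : 3 ≤ b) (hd : d₁ < d₂) (hd₂ : d₂ ≤ b - 1)
    (hfac : d₂ - d₁ = u₁ * u₂)
    (h₁ : ∀ p : ℕ, p.Prime → p ∣ u₁ → p ∣ b)
    (h₂ : ∀ p : ℕ, p.Prime → p ∣ u₂ → ¬ p ∣ b)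
    (N m₁ : ℕ) (hN : N = Nat.totient (u₂ ^ 2 * (b - 1) ^ 2)) (hm₁ : m₁ = N - 1)
    (x : ℚ)
    (hx : x = ((Nat.ofDigits b
          (List.replicate m₁ d₁ ++ (d₂ :: List.replicate m₁ d₁)).reverse : ℚ) -
        (Nat.ofDigits b (List.replicate m₁ d₁).reverse : ℚ)) /
      ((b : ℚ) ^ m₁ * ((b : ℚ) ^ (m₁ + 1) - 1))) :
    u₂ * x.den = b ^ N - 1 :=
  stmt7_general b d₁ d₂ u₁ u₂ hb hd hfac h₁ h₂ N m₁ hN hm₁ x hx
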